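/- arXiv:2104.13895 — 3 statements merged into one kernel-verified Lean document; each statement's English description precedes it below -/
import Mathlib

section
/- Suppose q, q_d : ℝ → ℝ⁴ are twice differentiable, α > 0, ξ(t) = q_d(t) − q(t), η(t) = ξ'(t) + α ξ(t), z₁(t) = (ξ(t), η(t)) ∈ ℝ⁸, and ξ'(t) = η(t) − α ξ(t). Assume M, C : ℝ → Matrix (Fin 4) (Fin 4) ℝ and G, P, d : ℝ → ℝ⁴ satisfy, for all t: ‖M(t)‖ ≤ c_M (operator norm), ‖C(t)‖ ≤ c_c‖q'(t)‖, ‖G(t)‖ ≤ c_g, ‖P(t)‖ ≤ c_{p1} + c_{p2}‖q'(t)‖, ‖d(t)‖ ≤ d_exo, and that the desired trajectory satisfies ‖q_d'(t)‖ ≤ k_{d1} and ‖q_d''(t)‖ ≤ k_{d2}. Define χ(t) = M(t)(q_d''(t) + α ξ'(t)) + C(t)(q_d'(t) + α ξ(t)) + G(t) + P(t) + d(t) + ξ(t). Then there exist nonnegative constants ρ₁, ρ₂, ρ₃ (depending only on c_M, c_c, c_g, c_{p1}, c_{p2}, d_exo, k_{d1}, k_{d2}, α) such that ‖χ(t)‖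 ≤ ρ₁ + ρ₂‖z₁(t)‖ + ρ₃‖z₁(t)‖² for all t. -/
/-- The action of a matrix on a vector of `EuclideanSpace ℝ (Fin 4)` (i.e. `A x`). -/
noncomputable def mulVecE (A : Matrix (Fin 4) (Fin 4) ℝ) (x : EuclideanSpace ℝ (Fin 4)) :
    EuclideanSpace ℝ (Fin 4) :=
  (EuclideanSpace.equiv (Fin 4) ℝ).symm (A.mulVec ((EuclideanSpace.equiv (Fin 4) ℝ) x))

/-- The stacked vector `z = (x, y) ∈ ℝ⁸` with `‖z‖² = ‖x‖² + ‖y‖²`. -/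
noncomputable def stack (x y : EuclideanSpace ℝ (Fin 4)) :
    WithLp 2 (EuclideanSpace ℝ (Fin 4) × EuclideanSpace ℝ (Fin 4)) :=
  (WithLp.equiv 2 _).symm (x, y)

lemma stack_fst_le (x y : EuclideanSpace ℝ (Fin 4)) : ‖x‖ ≤ ‖stack x y‖ := by
  have h := WithLp.prod_norm_sq_eq_of_L2 (stack x y)
  have hx : (stack x y).fst = x := rfl
  have hy : (stack x y).snd = y := rfl
  rw [hx, hy] at h
  nlinarith [norm_nonneg x, norm_nonneg y, norm_nonneg (stack x y), sq_nonneg ‖y‖]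

lemma stack_snd_le (x y : EuclideanSpace ℝ (Fin 4)) : ‖y‖ ≤ ‖stack x y‖ := by
  have h := WithLp.prod_norm_sq_eq_of_L2 (stack x y)
  have hx : (stack x y).fst = x := rfl
  have hy : (stack x y).snd = y := rfl
  rw [hx, hy] at h
  nlinarith [norm_nonneg x, norm_nonneg y, norm_nonneg (stack x y), sq_nonneg ‖x‖]

set_option maxHeartbeats 1000000 in
/-- the auxiliary signal `χ` is bounded as
`‖χ(t)‖ ≤ ρ₁ + ρ₂‖z₁(t)‖ + ρ₃‖z₁(t)‖²`, with constants depending only on the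
bounding constants of the dynamics, the desired-trajectory bounds, and `α`. -/
theorem stmt2
    (c_M c_c c_g c_p1 c_p2 d_exo k_d1 k_d2 : ℝ)
    (hc_M : 0 < c_M) (hc_c : 0 < c_c) (hc_g : 0 < c_g) (hc_p1 : 0 < c_p1)
    (hc_p2 : 0 < c_p2) (hd_exo : 0 < d_exo) (hk_d1 : 0 < k_d1) (hk_d2 : 0 < k_d2)
    (α : ℝ) (hα : 0 < α) :
    ∃ ρ₁ ρ₂ ρ₃ : ℝ, 0 ≤ ρ₁ ∧ 0 ≤ ρ₂ ∧ 0 ≤ ρ₃ ∧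
      ∀ (q q_d q' q_d' q'' q_d'' : ℝ → EuclideanSpace ℝ (Fin 4)),
      (∀ t, HasDerivAt q (q' t) t) → (∀ t, HasDerivAt q' (q'' t) t) →
      (∀ t, HasDerivAt q_d (q_d' t) t) → (∀ t, HasDerivAt q_d' (q_d'' t) t) →
      ∀ (M C : ℝ → Matrix (Fin 4) (Fin 4) ℝ) (G P d : ℝ → EuclideanSpace ℝ (Fin 4)),
      -- operator norm bounds ‖M(t)‖ ≤ c_M and ‖C(t)‖ ≤ c_c‖q'(t)‖
      (∀ t (x : EuclideanSpace ℝ (Fin 4)), ‖mulVecE (M t) x‖ ≤ c_M * ‖x‖) →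
      (∀ t (x : EuclideanSpace ℝ (Fin 4)), ‖mulVecE (C t) x‖ ≤ c_c * ‖q' t‖ * ‖x‖) →
      (∀ t, ‖G t‖ ≤ c_g) →
      (∀ t, ‖P t‖ ≤ c_p1 + c_p2 * ‖q' t‖) →
      (∀ t, ‖d t‖ ≤ d_exo) →
      (∀ t, ‖q_d' t‖ ≤ k_d1) → (∀ t, ‖q_d'' t‖ ≤ k_d2) →
      ∀ (ξ η χ : ℝ → EuclideanSpace ℝ (Fin 4))
        (z₁ : ℝ → WithLp 2 (EuclideanSpace ℝ (Fin 4) × EuclideanSpace ℝ (Fin 4))),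
      ξ = (fun t => q_d t - q t) →
      η = (fun t => deriv ξ t + α • ξ t) →
      z₁ = (fun t => stack (ξ t) (η t)) →
      (∀ t, deriv ξ t = η t - α • ξ t) →
      χ = (fun t => mulVecE (M t) (q_d'' t + α • deriv ξ t)
        + mulVecE (C t) (q_d' t + α • ξ t) + G t + P t + d t + ξ t) →
      ∀ t, ‖χ t‖ ≤ ρ₁ + ρ₂ * ‖z₁ t‖ + ρ₃ * ‖z₁ t‖ ^ 2 := by
  refine ⟨c_M * k_d2 + c_c * k_d1 ^ 2 + c_g + c_p1 + c_p2 * k_d1 + d_exo,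
    c_M * α * (1 + α) + c_c * k_d1 * (1 + 2 * α) + c_p2 * (1 + α) + 1,
    c_c * α * (1 + α), by positivity, by positivity, by positivity, ?_⟩
  intro q q_d q' q_d' q'' q_d'' hq hq' hqd hqd' M C G P d hM hC hG hP hd hqd1 hqd2
    ξ η χ z₁ hξ hη hz₁ hderiv hχ t
  set s := ‖z₁ t‖ with hs
  have hs0 : 0 ≤ s := norm_nonneg _
  have hξle : ‖ξ t‖ ≤ s := by rw [hs, hz₁]; exact stack_fst_le _ _
  have hηle : ‖η t‖ ≤ s := by rw [hs, hz₁]; exact stack_snd_le _ _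
  have hdle : ‖deriv ξ t‖ ≤ (1 + α) * s := by
    rw [hderiv t]
    calc ‖η t - α • ξ t‖ ≤ ‖η t‖ + ‖α • ξ t‖ := norm_sub_le _ _
      _ = ‖η t‖ + α * ‖ξ t‖ := by rw [norm_smul, Real.norm_eq_abs, abs_of_pos hα]
      _ ≤ s + α * s := by
          have := mul_le_mul_of_nonneg_left hξle hα.le
          linarith
      _ = (1 + α) * s := by ring
  -- q' t = q_d' t - deriv ξ t
  have hderξ : deriv ξ t = q_d' t - q' t := by
    have : HasDerivAt ξ (q_d' t - q' t) t := by
      rw [hξ]; exact (hqd t).sub (hq t)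
    exact this.deriv
  have hq'le : ‖q' t‖ ≤ k_d1 + (1 + α) * s := by
    have : q' t = q_d' t - deriv ξ t := by rw [hderξ]; abel
    rw [this]
    calc ‖q_d' t - deriv ξ t‖ ≤ ‖q_d' t‖ + ‖deriv ξ t‖ := norm_sub_le _ _
      _ ≤ k_d1 + (1 + α) * s := add_le_add (hqd1 t) hdle
  -- bound each term
  have hMterm : ‖mulVecE (M t) (q_d'' t + α • deriv ξ t)‖ ≤
      c_M * (k_d2 + α * ((1 + α) * s)) := by
    calc ‖mulVecE (M t) (q_d'' t + α • deriv ξ t)‖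
        ≤ c_M * ‖q_d'' t + α • deriv ξ t‖ := hM t _
      _ ≤ c_M * (k_d2 + α * ((1 + α) * s)) := by
          apply mul_le_mul_of_nonneg_left _ hc_M.le
          calc ‖q_d'' t + α • deriv ξ t‖ ≤ ‖q_d'' t‖ + ‖α • deriv ξ t‖ := norm_add_le _ _
            _ = ‖q_d'' t‖ + α * ‖deriv ξ t‖ := by
                rw [norm_smul, Real.norm_eq_abs, abs_of_pos hα]
            _ ≤ k_d2 + α * ((1 + α) * s) :=
                add_le_add (hqd2 t) (mul_le_mul_of_nonneg_left hdle hα.le)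
  have hCterm : ‖mulVecE (C t) (q_d' t + α • ξ t)‖ ≤
      c_c * (k_d1 + (1 + α) * s) * (k_d1 + α * s) := by
    calc ‖mulVecE (C t) (q_d' t + α • ξ t)‖
        ≤ c_c * ‖q' t‖ * ‖q_d' t + α • ξ t‖ := hC t _
      _ ≤ c_c * (k_d1 + (1 + α) * s) * (k_d1 + α * s) := by
          have h1 : ‖q_d' t + α • ξ t‖ ≤ k_d1 + α * s := by
            calc ‖q_d' t + α • ξ t‖ ≤ ‖q_d' t‖ + ‖α • ξ t‖ := norm_add_le _ _
              _ = ‖q_d' t‖ + α * ‖ξ t‖ := by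
                  rw [norm_smul, Real.norm_eq_abs, abs_of_pos hα]
              _ ≤ k_d1 + α * s :=
                  add_le_add (hqd1 t) (mul_le_mul_of_nonneg_left hξle hα.le)
          have h2 : c_c * ‖q' t‖ ≤ c_c * (k_d1 + (1 + α) * s) :=
            mul_le_mul_of_nonneg_left hq'le hc_c.le
          exact mul_le_mul h2 h1 (norm_nonneg _) (by positivity)
  have hPle : ‖P t‖ ≤ c_p1 + c_p2 * (k_d1 + (1 + α) * s) :=
    (hP t).trans (by nlinarith [mul_le_mul_of_nonneg_left hq'le hc_p2.le])
  have hχle : ‖χ t‖ ≤ ‖mulVecE (M t) (q_d'' t + α • deriv ξ t)‖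
      + ‖mulVecE (C t) (q_d' t + α • ξ t)‖ + ‖G t‖ + ‖P t‖ + ‖d t‖ + ‖ξ t‖ := by
    rw [hχ]
    calc ‖mulVecE (M t) (q_d'' t + α • deriv ξ t) + mulVecE (C t) (q_d' t + α • ξ t)
          + G t + P t + d t + ξ t‖
        ≤ ‖mulVecE (M t) (q_d'' t + α • deriv ξ t) + mulVecE (C t) (q_d' t + α • ξ t)
          + G t + P t + d t‖ + ‖ξ t‖ := norm_add_le _ _
      _ ≤ ‖mulVecE (M t) (q_d'' t + α • deriv ξ t) + mulVecE (C t) (q_d' t + α • ξ t)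
          + G t + P t‖ + ‖d t‖ + ‖ξ t‖ := by gcongr; exact norm_add_le _ _
      _ ≤ ‖mulVecE (M t) (q_d'' t + α • deriv ξ t) + mulVecE (C t) (q_d' t + α • ξ t)
          + G t‖ + ‖P t‖ + ‖d t‖ + ‖ξ t‖ := by gcongr; exact norm_add_le _ _
      _ ≤ ‖mulVecE (M t) (q_d'' t + α • deriv ξ t) + mulVecE (C t) (q_d' t + α • ξ t)‖
          + ‖G t‖ + ‖P t‖ + ‖d t‖ + ‖ξ t‖ := by gcongr; exact norm_add_le _ _
      _ ≤ ‖mulVecE (M t) (q_d'' t + α • deriv ξ t)‖ + ‖mulVecE (C t) (q_d' t + α • ξ t)‖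
          + ‖G t‖ + ‖P t‖ + ‖d t‖ + ‖ξ t‖ := by gcongr; exact norm_add_le _ _
  have hGt := hG t
  have hdt := hd t
  nlinarith [hχle, hMterm, hCterm, hPle, hξle, hs0]
end

section
/- Let ξ, η : ℝ → ℝ⁴ be differentiable, z₁(t) = (ξ(t), η(t)) ∈ ℝ⁸, and let M : ℝ → Matrix (Fin 4) (Fin 4) ℝ be differentiable with each M(t) symmetric and c_m‖x‖² ≤ xᵀM(t)x ≤ c_M‖x‖² for all x ∈ ℝ⁴ (0 < c_m ≤ c_M). Let C, B : ℝ → Matrix (Fin 4) (Fin 4) ℝ satisfy the skew-symmetry property η(t)ᵀ(½M'(t) − C(t))η(t) = 0 and the control-effectiveness bound xᵀB(t)x ≥ B̲‖x‖² for all x ∈ ℝ⁴, where B̲ ≥ 1/4. Let χ : ℝ → ℝ⁴ satisfy ‖χ(t)‖ ≤ ρ(‖z₁(t)‖) where ρ(s) = ρ₁ + ρ₂ s + ρ₃ s² with ρ₁, ρ₂, ρ₃ ≥ 0. Suppose for gains α, k₁, ε > 0 the closed-loop equations ξ'(t) = η(t) − α ξ(t) and M(t)η'(t) = χ(t) − C(t)η(t)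 − ξ(t) − B(t)(k₁ η(t) + (1/ε) ρ(‖z₁(t)‖)² η(t)) hold. Then V(t) = ½‖ξ(t)‖² + ½η(t)ᵀM(t)η(t) is differentiable and satisfies V'(t) ≤ −α‖ξ(t)‖² − B̲ k₁‖η(t)‖² + ε ≤ −δ V(t) + ε for all t, where δ = min(α, B̲ k₁)/b and b = max(1/2, c_M/2). -/
/-!
Along a closed-loop trajectory the cross terms `⟪ξ, η⟫` cancel and skew-symmetry removes
`½ Ṁ - C`, so that `V' = -α‖ξ‖² + ⟪η, χ⟫ - (k₁ + ρ²/ε) ηᵀBη`. The disturbance `⟪η, χ⟫ ≤ ‖η‖ρ`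
is absorbed by the robustifying term up to `ε` by completing the square, which is where
`B̲ ≥ 1/4` enters. Finally `V ≤ b (‖ξ‖² + ‖η‖²)` turns the bound into `-δ V + ε`.
-/

/-- The quadratic form `xᵀ A x`. -/
noncomputable def quadForm (A : Matrix (Fin 4) (Fin 4) ℝ) (x : EuclideanSpace ℝ (Fin 4)) : ℝ :=
  ∑ i, ∑ j, x i * A i j * x j

open RealInnerProductSpace

section QuadForm

variable (A : Matrix (Fin 4) (Fin 4) ℝ) (x y : EuclideanSpace ℝ (Fin 4))

lemma inner_mulVecE : ⟪x, mulVecE A y⟫ = ∑ i, ∑ j, x i * A i j * y j := by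
  simp only [mulVecE, PiLp.inner_apply, RCLike.inner_apply, conj_trivial]
  refine Finset.sum_congr rfl fun i _ => ?_
  change (∑ j, A i j * y j) * x i = _
  rw [Finset.sum_mul]
  exact Finset.sum_congr rfl fun j _ => by ring

lemma inner_mulVecE_self : ⟪x, mulVecE A x⟫ = quadForm A x :=
  inner_mulVecE A x x

lemma mulVecE_smul (c : ℝ) : mulVecE A (c • x) = c • mulVecE A x := by
  simp [mulVecE, Matrix.mulVec_smul]

lemma inner_mulVecE_comm {A : Matrix (Fin 4) (Fin 4) ℝ} (hA : A.IsSymm) :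
    ⟪x, mulVecE A y⟫ = ⟪y, mulVecE A x⟫ := by
  rw [inner_mulVecE, inner_mulVecE, Finset.sum_comm]
  refine Finset.sum_congr rfl fun j _ => Finset.sum_congr rfl fun i _ => ?_
  rw [hA.apply i j]
  ring

lemma quadForm_smul_sub (c : ℝ) (B : Matrix (Fin 4) (Fin 4) ℝ) :
    quadForm (c • A - B) x = c * quadForm A x - quadForm B x := by
  simp only [quadForm, Matrix.sub_apply, Matrix.smul_apply, smul_eq_mul, Finset.mul_sum,
    ← Finset.sum_sub_distrib]
  exact Finset.sum_congr rfl fun i _ => Finset.sum_congr rfl fun j _ => by ring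

end QuadForm

section LyapunovDerivative

variable {ξ η : ℝ → EuclideanSpace ℝ (Fin 4)} {ξd ηd : EuclideanSpace ℝ (Fin 4)}
  {M : ℝ → Matrix (Fin 4) (Fin 4) ℝ} {Md : Matrix (Fin 4) (Fin 4) ℝ} {t : ℝ}

lemma hasDerivAt_quadForm (hM : ∀ i j, HasDerivAt (fun s => M s i j) (Md i j) t)
    (hη : HasDerivAt η ηd t) (hMt : (M t).IsSymm) :
    HasDerivAt (fun s => quadForm (M s) (η s))
      (quadForm Md (η t) + 2 * ⟪η t, mulVecE (M t) ηd⟫) t := by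
  have hη_apply (i : Fin 4) : HasDerivAt (fun s => η s i) (ηd i) t :=
    (EuclideanSpace.proj (𝕜 := ℝ) i).hasFDerivAt.comp_hasDerivAt t hη
  unfold quadForm
  refine (HasDerivAt.fun_sum fun i _ => HasDerivAt.fun_sum fun j _ =>
    ((hη_apply i).fun_mul (hM i j)).fun_mul (hη_apply j)).congr_deriv ?_
  rw [two_mul]
  nth_rw 1 [inner_mulVecE_comm _ _ hMt]
  simp only [inner_mulVecE, ← Finset.sum_add_distrib]
  exact Finset.sum_congr rfl fun i _ => Finset.sum_congr rfl fun j _ => by ring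

lemma hasDerivAt_lyapunov (hξ : HasDerivAt ξ ξd t) (hη : HasDerivAt η ηd t)
    (hM : ∀ i j, HasDerivAt (fun s => M s i j) (Md i j) t) (hMt : (M t).IsSymm) :
    HasDerivAt (fun s => 1 / 2 * ‖ξ s‖ ^ 2 + 1 / 2 * quadForm (M s) (η s))
      (⟪ξ t, ξd⟫ + 1 / 2 * quadForm Md (η t) + ⟪η t, mulVecE (M t) ηd⟫) t := by
  refine ((hξ.norm_sq.const_mul (1 / 2)).add
    ((hasDerivAt_quadForm hM hη hMt).const_mul (1 / 2))).congr_deriv ?_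
  ring

end LyapunovDerivative

lemma lyapunov_deriv_closedLoop {ξ η ξd ηd χ : EuclideanSpace ℝ (Fin 4)}
    {M Md C B : Matrix (Fin 4) (Fin 4) ℝ} {α κ : ℝ}
    (hloop₁ : ξd = η - α • ξ)
    (hloop₂ : mulVecE M ηd = χ - mulVecE C η - ξ - mulVecE B (κ • η))
    (hskew : quadForm ((1 / 2 : ℝ) • Md - C) η = 0) :
    ⟪ξ, ξd⟫ + 1 / 2 * quadForm Md η + ⟪η, mulVecE M ηd⟫
      = -α * ‖ξ‖ ^ 2 + ⟪η, χ⟫ - κ * quadForm B η := by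
  rw [quadForm_smul_sub] at hskew
  rw [hloop₁, hloop₂, inner_sub_right, inner_sub_right, inner_sub_right, inner_sub_right,
    real_inner_smul_right, real_inner_self_eq_norm_sq, mulVecE_smul, real_inner_smul_right,
    inner_mulVecE_self, inner_mulVecE_self, real_inner_comm ξ η]
  linarith

lemma self_le_add_div_mul_sq {ε β : ℝ} (hε : 0 < ε) (hβ : 1 / 4 ≤ β) (a : ℝ) :
    a ≤ ε + β / ε * a ^ 2 := by
  rw [div_mul_eq_mul_div, ← sub_le_iff_le_add', le_div_iff₀ hε]
  nlinarith [sq_nonneg (a - 2 * ε)]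

lemma inner_sub_mul_quadForm_le {η χ : EuclideanSpace ℝ (Fin 4)} {B : Matrix (Fin 4) (Fin 4) ℝ}
    {Blo k r ε : ℝ} (hε : 0 < ε) (hBlo : 1 / 4 ≤ Blo) (hk : 0 ≤ k)
    (hB : Blo * ‖η‖ ^ 2 ≤ quadForm B η) (hχ : ‖χ‖ ≤ r) :
    ⟪η, χ⟫ - (k + 1 / ε * r ^ 2) * quadForm B η ≤ -Blo * k * ‖η‖ ^ 2 + ε := by
  have hχη : ⟪η, χ⟫ ≤ ‖η‖ * r :=
    (real_inner_le_norm _ _).trans (mul_le_mul_of_nonneg_left hχ (norm_nonneg _))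
  have hgain : (k + 1 / ε * r ^ 2) * (Blo * ‖η‖ ^ 2) ≤ (k + 1 / ε * r ^ 2) * quadForm B η :=
    mul_le_mul_of_nonneg_left hB (by positivity)
  linear_combination hχη + hgain + self_le_add_div_mul_sq hε hBlo (‖η‖ * r)

lemma half_add_half_le_max_mul {x y q c : ℝ} (hx : 0 ≤ x) (hy : 0 ≤ y) (hq : q ≤ c * y) :
    1 / 2 * x + 1 / 2 * q ≤ max (1 / 2) (c / 2) * (x + y) := by
  linarith [mul_le_mul_of_nonneg_right (le_max_left (1 / 2) (c / 2)) hx,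
    mul_le_mul_of_nonneg_right (le_max_right (1 / 2) (c / 2)) hy]

lemma min_div_mul_le_of_le_mul_add {a β b v x y : ℝ} (ha : 0 ≤ a) (hβ : 0 ≤ β) (hb : 0 < b)
    (hx : 0 ≤ x) (hy : 0 ≤ y) (hv : v ≤ b * (x + y)) :
    min a β / b * v ≤ a * x + β * y :=
  calc min a β / b * v ≤ min a β / b * (b * (x + y)) :=
        mul_le_mul_of_nonneg_left hv (div_nonneg (le_min ha hβ) hb.le)
    _ = min a β * x + min a β * y := by field_simp
    _ ≤ a * x + β * y := add_le_add (mul_le_mul_of_nonneg_right (min_le_left _ _) hx)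
        (mul_le_mul_of_nonneg_right (min_le_right _ _) hy)

theorem stmt3_general
    (ξ η ξd ηd : ℝ → EuclideanSpace ℝ (Fin 4))
    (hξ : ∀ t, HasDerivAt ξ (ξd t) t) (hη : ∀ t, HasDerivAt η (ηd t) t)
    (z₁ : ℝ → WithLp 2 (EuclideanSpace ℝ (Fin 4) × EuclideanSpace ℝ (Fin 4)))
    (c_M : ℝ)
    (M Md : ℝ → Matrix (Fin 4) (Fin 4) ℝ)
    (hM : ∀ i j t, HasDerivAt (fun s => M s i j) (Md t i j) t)
    (hMsymm : ∀ t, (M t).IsSymm)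
    (hMhigh : ∀ t (x : EuclideanSpace ℝ (Fin 4)), quadForm (M t) x ≤ c_M * ‖x‖ ^ 2)
    (C B : ℝ → Matrix (Fin 4) (Fin 4) ℝ)
    (hskew : ∀ t, quadForm ((1 / 2 : ℝ) • Md t - C t) (η t) = 0)
    (Blo : ℝ) (hBlo : (1 / 4 : ℝ) ≤ Blo)
    (hB : ∀ t (x : EuclideanSpace ℝ (Fin 4)), Blo * ‖x‖ ^ 2 ≤ quadForm (B t) x)
    (ρ : ℝ → ℝ)
    (χ : ℝ → EuclideanSpace ℝ (Fin 4)) (hχ : ∀ t, ‖χ t‖ ≤ ρ ‖z₁ t‖)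
    (α k₁ ε : ℝ) (hα : 0 < α) (hk₁ : 0 < k₁) (hε : 0 < ε)
    (hloop₁ : ∀ t, ξd t = η t - α • ξ t)
    (hloop₂ : ∀ t, mulVecE (M t) (ηd t)
      = χ t - mulVecE (C t) (η t) - ξ t
        - mulVecE (B t) (k₁ • η t + ((1 / ε) * (ρ ‖z₁ t‖) ^ 2) • η t))
    (V : ℝ → ℝ)
    (hV : V = fun t => (1 / 2) * ‖ξ t‖ ^ 2 + (1 / 2) * quadForm (M t) (η t))
    (b δ : ℝ) (hb : b = max (1 / 2) (c_M / 2)) (hδ : δ = min α (Blo * k₁) / b) :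
    ∀ t, DifferentiableAt ℝ V t ∧
      deriv V t ≤ -α * ‖ξ t‖ ^ 2 - Blo * k₁ * ‖η t‖ ^ 2 + ε ∧
      -α * ‖ξ t‖ ^ 2 - Blo * k₁ * ‖η t‖ ^ 2 + ε ≤ -δ * V t + ε := by
  intro t
  subst hV hb hδ
  have hD := hasDerivAt_lyapunov (hξ t) (hη t) (hM · · t) (hMsymm t)
  have hloop₂' : mulVecE (M t) (ηd t) = χ t - mulVecE (C t) (η t) - ξ t
      - mulVecE (B t) ((k₁ + 1 / ε * ρ ‖z₁ t‖ ^ 2) • η t) := by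
    rw [hloop₂ t, add_smul]
  have hrate := lyapunov_deriv_closedLoop (hloop₁ t) hloop₂' (hskew t)
  have hpower := inner_sub_mul_quadForm_le hε hBlo hk₁.le (hB t (η t)) (hχ t)
  have hVle := half_add_half_le_max_mul (sq_nonneg ‖ξ t‖) (sq_nonneg ‖η t‖) (hMhigh t (η t))
  have hBk : 0 ≤ Blo * k₁ := mul_nonneg (by linarith) hk₁.le
  have hdecay := min_div_mul_le_of_le_mul_add hα.le hBk
    (one_half_pos.trans_le (le_max_left _ _)) (sq_nonneg _) (sq_nonneg _) hVle
  beta_reduce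
  refine ⟨hD.differentiableAt, ?_, ?_⟩
  · rw [hD.deriv, hrate]
    linarith
  · linarith

/-- the joint-layer Lyapunov function is differentiable and satisfies
`V'(t) ≤ −α‖ξ(t)‖² − B̲k₁‖η(t)‖² + ε ≤ −δ V(t) + ε`. -/
theorem stmt3
    (ξ η ξd ηd : ℝ → EuclideanSpace ℝ (Fin 4))
    (hξ : ∀ t, HasDerivAt ξ (ξd t) t) (hη : ∀ t, HasDerivAt η (ηd t) t)
    (z₁ : ℝ → WithLp 2 (EuclideanSpace ℝ (Fin 4) × EuclideanSpace ℝ (Fin 4)))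
    (hz₁ : z₁ = fun t => stack (ξ t) (η t))
    (c_m c_M : ℝ) (hcm : 0 < c_m) (hcmM : c_m ≤ c_M)
    (M Md : ℝ → Matrix (Fin 4) (Fin 4) ℝ)
    (hM : ∀ i j t, HasDerivAt (fun s => M s i j) (Md t i j) t)
    (hMsymm : ∀ t, (M t).IsSymm)
    (hMlow : ∀ t (x : EuclideanSpace ℝ (Fin 4)), c_m * ‖x‖ ^ 2 ≤ quadForm (M t) x)
    (hMhigh : ∀ t (x : EuclideanSpace ℝ (Fin 4)), quadForm (M t) x ≤ c_M * ‖x‖ ^ 2)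
    (C B : ℝ → Matrix (Fin 4) (Fin 4) ℝ)
    (hskew : ∀ t, quadForm ((1 / 2 : ℝ) • Md t - C t) (η t) = 0)
    (Blo : ℝ) (hBlo : (1 / 4 : ℝ) ≤ Blo)
    (hB : ∀ t (x : EuclideanSpace ℝ (Fin 4)), Blo * ‖x‖ ^ 2 ≤ quadForm (B t) x)
    (ρ₁ ρ₂ ρ₃ : ℝ) (hρ₁ : 0 ≤ ρ₁) (hρ₂ : 0 ≤ ρ₂) (hρ₃ : 0 ≤ ρ₃)
    (ρ : ℝ → ℝ) (hρ : ρ = fun s => ρ₁ + ρ₂ * s + ρ₃ * s ^ 2)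
    (χ : ℝ → EuclideanSpace ℝ (Fin 4)) (hχ : ∀ t, ‖χ t‖ ≤ ρ ‖z₁ t‖)
    (α k₁ ε : ℝ) (hα : 0 < α) (hk₁ : 0 < k₁) (hε : 0 < ε)
    (hloop₁ : ∀ t, ξd t = η t - α • ξ t)
    (hloop₂ : ∀ t, mulVecE (M t) (ηd t)
      = χ t - mulVecE (C t) (η t) - ξ t
        - mulVecE (B t) (k₁ • η t + ((1 / ε) * (ρ ‖z₁ t‖) ^ 2) • η t))
    (V : ℝ → ℝ)
    (hV : V = fun t => (1 / 2) * ‖ξ t‖ ^ 2 + (1 / 2) * quadForm (M t) (η t))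
    (b δ : ℝ) (hb : b = max (1 / 2) (c_M / 2)) (hδ : δ = min α (Blo * k₁) / b) :
    ∀ t, DifferentiableAt ℝ V t ∧
      deriv V t ≤ -α * ‖ξ t‖ ^ 2 - Blo * k₁ * ‖η t‖ ^ 2 + ε ∧
      -α * ‖ξ t‖ ^ 2 - Blo * k₁ * ‖η t‖ ^ 2 + ε ≤ -δ * V t + ε :=
  stmt3_general ξ η ξd ηd hξ hη z₁ c_M M Md hM hMsymm hMhigh C B hskew Blo hBlo hB ρ χ hχ α k₁ ε hα
    hk₁ hε hloop₁ hloop₂ V hV b δ hb hδ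
end

section
/- (Theorem 3, average dwell time) Let λ > 0, μ ≥ 1, τ_a > 0 with τ_a ≥ (ln μ)/λ, and let N₀ ≥ 0. Let N ∈ ℕ, t₀ ≤ t₁ ≤ ⋯ ≤ t_N ≤ T, and suppose the switching count satisfies the average dwell time condition N ≤ N₀ + (T − t₀)/τ_a. Suppose V₀, V₁, …, V_N, V_T are nonnegative real numbers with V_{i+1} ≤ μ e^{−λ(t_{i+1} − t_i)} V_i for each 0 ≤ i < N and V_T ≤ e^{−λ(T − t_N)} V_N. Then V_T ≤ μ^{N₀} exp(((ln μ)/τ_a − λ)(T − t₀)) V₀, and the exponent satisfies (ln μ)/τ_a − λ ≤ 0, so V_T ≤ μ^{N₀} V₀; if moreover τ_a > (ln μ)/λ and μ > 1, the bound decays exponentially in T − t₀. -/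
/-- Theorem 3, average dwell time: under the average dwell time
condition `N ≤ N₀ + (T − t₀)/τ_a` with `τ_a ≥ (ln μ)/λ`, the switched Lyapunov
bound gives `V_T ≤ μ^{N₀} exp(((ln μ)/τ_a − λ)(T − t₀)) V₀`, the exponent is
nonpositive (so `V_T ≤ μ^{N₀} V₀`), and it is strictly negative when
`τ_a > (ln μ)/λ` and `μ > 1`. -/
theorem stmt15
    (lam μ τ_a N₀ : ℝ)
    (hlam : 0 < lam) (hμ : 1 ≤ μ) (hτ : 0 < τ_a)
    (hdwell : Real.log μ / lam ≤ τ_a) (hN₀ : 0 ≤ N₀)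
    (N : ℕ) (t : ℕ → ℝ) (T : ℝ)
    (ht : ∀ i < N, t i ≤ t (i + 1)) (htT : t N ≤ T)
    (hcount : (N : ℝ) ≤ N₀ + (T - t 0) / τ_a)
    (V : ℕ → ℝ) (VT : ℝ)
    (hVnonneg : ∀ i ≤ N, 0 ≤ V i) (hVTnonneg : 0 ≤ VT)
    (hstep : ∀ i < N, V (i + 1) ≤ μ * Real.exp (-lam * (t (i + 1) - t i)) * V i)
    (hlast : VT ≤ Real.exp (-lam * (T - t N)) * V N) :
    VT ≤ μ ^ N₀ * Real.exp ((Real.log μ / τ_a - lam) * (T - t 0)) * V 0 ∧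
      Real.log μ / τ_a - lam ≤ 0 ∧
      VT ≤ μ ^ N₀ * V 0 ∧
      (Real.log μ / lam < τ_a → 1 < μ → Real.log μ / τ_a - lam < 0) := by
  have hμ0 : (0:ℝ) < μ := lt_of_lt_of_le one_pos hμ
  have hlogμ : 0 ≤ Real.log μ := Real.log_nonneg hμ
  have hV0 : 0 ≤ V 0 := hVnonneg 0 (Nat.zero_le _)
  -- t is monotone up to N
  have hmono : ∀ i ≤ N, t 0 ≤ t i := by
    intro i hi
    induction i with
    | zero => exact le_rfl
    | succ k ih =>
      exact le_trans (ih (le_trans (Nat.le_succ k) hi))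
        (ht k (Nat.lt_of_succ_le hi))
  have hTt0 : 0 ≤ T - t 0 := by
    have := hmono N le_rfl
    linarith
  -- main induction
  have key : ∀ i ≤ N, V i ≤ μ ^ (i:ℕ) * Real.exp (-lam * (t i - t 0)) * V 0 := by
    intro i hi
    induction i with
    | zero => simp
    | succ k ih =>
      have hk : k < N := Nat.lt_of_succ_le hi
      have ih' := ih (le_of_lt hk)
      have h1 := hstep k hk
      have h2 : μ * Real.exp (-lam * (t (k+1) - t k)) * V k ≤
          μ * Real.exp (-lam * (t (k+1) - t k)) *
            (μ ^ (k:ℕ) * Real.exp (-lam * (t k - t 0)) * V 0) := by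
        apply mul_le_mul_of_nonneg_left ih'
        positivity
      calc V (k+1) ≤ _ := h1
        _ ≤ _ := h2
        _ = μ ^ (k+1) * (Real.exp (-lam * (t (k+1) - t k)) *
              Real.exp (-lam * (t k - t 0))) * V 0 := by ring
        _ = μ ^ (k+1) * Real.exp (-lam * (t (k+1) - t 0)) * V 0 := by
              rw [← Real.exp_add]; ring_nf
  have hVN := key N le_rfl
  have main : VT ≤ (μ:ℝ) ^ ((N:ℝ)) * Real.exp (-lam * (T - t 0)) * V 0 := by
    calc VT ≤ Real.exp (-lam * (T - t N)) * V N := hlast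
      _ ≤ Real.exp (-lam * (T - t N)) *
          (μ ^ (N:ℕ) * Real.exp (-lam * (t N - t 0)) * V 0) := by
          apply mul_le_mul_of_nonneg_left hVN; positivity
      _ = μ ^ (N:ℕ) * (Real.exp (-lam * (T - t N)) *
            Real.exp (-lam * (t N - t 0))) * V 0 := by ring
      _ = μ ^ (N:ℕ) * Real.exp (-lam * (T - t 0)) * V 0 := by
            rw [← Real.exp_add]; ring_nf
      _ = (μ:ℝ) ^ ((N:ℝ)) * Real.exp (-lam * (T - t 0)) * V 0 := by
            rw [Real.rpow_natCast]
  have hpow : (μ:ℝ) ^ ((N:ℝ)) ≤ μ ^ (N₀ + (T - t 0) / τ_a) :=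
    Real.rpow_le_rpow_of_exponent_le hμ hcount
  have bound1 : VT ≤ μ ^ N₀ * Real.exp ((Real.log μ / τ_a - lam) * (T - t 0)) * V 0 := by
    have := main.trans (by
      apply mul_le_mul_of_nonneg_right (mul_le_mul_of_nonneg_right hpow (Real.exp_nonneg _)) hV0)
    calc VT ≤ μ ^ (N₀ + (T - t 0) / τ_a) * Real.exp (-lam * (T - t 0)) * V 0 := this
      _ = μ ^ N₀ * (μ ^ ((T - t 0) / τ_a) * Real.exp (-lam * (T - t 0))) * V 0 := by
          rw [Real.rpow_add hμ0]; ring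
      _ = μ ^ N₀ * Real.exp ((Real.log μ / τ_a - lam) * (T - t 0)) * V 0 := by
          rw [Real.rpow_def_of_pos hμ0 ((T - t 0) / τ_a), ← Real.exp_add]
          congr 2
          field_simp
          ring
  have hexp : Real.log μ / τ_a - lam ≤ 0 := by
    have h1 : Real.log μ ≤ lam * τ_a := by
      have := (div_le_iff₀ hlam).mp hdwell
      linarith
    have : Real.log μ / τ_a ≤ lam := (div_le_iff₀ hτ).mpr (by linarith)
    linarith
  refine ⟨bound1, hexp, ?_, ?_⟩
  · have h1 : Real.exp ((Real.log μ / τ_a - lam) * (T - t 0)) ≤ 1 := by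
      rw [Real.exp_le_one_iff]
      exact mul_nonpos_of_nonpos_of_nonneg hexp hTt0
    calc VT ≤ μ ^ N₀ * Real.exp ((Real.log μ / τ_a - lam) * (T - t 0)) * V 0 := bound1
      _ ≤ μ ^ N₀ * 1 * V 0 := by
          apply mul_le_mul_of_nonneg_right (mul_le_mul_of_nonneg_left h1 (by positivity)) hV0
      _ = μ ^ N₀ * V 0 := by ring
  · intro hstrict hμ1
    have hlog : 0 < Real.log μ := Real.log_pos hμ1
    have h1 : Real.log μ < lam * τ_a := by
      have := (div_lt_iff₀ hlam).mp hstrict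
      linarith
    have : Real.log μ / τ_a < lam := (div_lt_iff₀ hτ).mpr (by linarith)
    linarith
end
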